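/- Fix k ≥ 1 and let p(j) be the j-th smallest positive integer whose Zeckendorf decomposition has F_{2k} as its smallest summand. Then for j ≥ 2, F_{2k} appears in the Chung-Graham decomposition of p(j) if and only if the (j−1)-th letter of the golden string S is B. Moreover, every summand in the Chung-Graham decomposition of p(j) is at least F_{2k}. -/

import Mathlib

/-- The finite golden strings: `gs 1 = [B]`, `gs 2 = [B, A]`, `gs n = gs (n-1) ++ gs (n-2)`.
Here `true` denotes the letter B and `false` denotes the letter A. -/
def gs : ℕ → List Bool
  | 0 => []
  | 1 => [true]
  | 2 => [true, false]
  | (n+3) => gs (n+2) ++ gs (n+1)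

/-- The `i`-th letter (1-indexed) of the infinite golden string `S`;
`true` = B, `false` = A.  Since `gs n` is a prefix of `gs (n+1)` and
`(gs (i+1)).length = F (i+2) ≥ i`, this is well-defined. -/
def goldenLetter (i : ℕ) : Bool := (gs (i+1)).getD (i-1) true

/-- `s` is the (index set of the) Zeckendorf decomposition of `n`:
a set of indices `≥ 2`, no two adjacent, with `n = ∑_{i ∈ s} F i`. -/
def IsZeck (n : ℕ) (s : Finset ℕ) : Prop :=
  (∀ i ∈ s, 2 ≤ i) ∧ (∀ i ∈ s, i + 1 ∉ s) ∧ n = ∑ i ∈ s, Nat.fib i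

/-- `c` is the coefficient function of the Chung–Graham decomposition of `n`:
`n = ∑_{i ≥ 1} c i * F (2i)` with `c i ∈ {0,1,2}` and a coefficient `0`
strictly between any two coefficients equal to `2`. -/
def IsCG (n : ℕ) (c : ℕ →₀ ℕ) : Prop :=
  (∀ i, c i ≤ 2) ∧ c 0 = 0 ∧
  (∀ i₁ i₂, i₁ < i₂ → c i₁ = 2 → c i₂ = 2 → ∃ j, i₁ < j ∧ j < i₂ ∧ c j = 0) ∧
  n = c.sum (fun i a => a * Nat.fib (2 * i))

/-- `n` has `F (2k)` as the smallest summand of its Zeckendorf decomposition. -/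
def ZeckMin (k n : ℕ) : Prop :=
  ∃ s : Finset ℕ, IsZeck n s ∧ 2 * k ∈ s ∧ ∀ i ∈ s, 2 * k ≤ i

/-- `n` has `F (2k)` or `2 F (2k)` as the smallest summand of its
Chung–Graham decomposition. -/
def CGMin (k n : ℕ) : Prop :=
  ∃ c : ℕ →₀ ℕ, IsCG n c ∧ 1 ≤ c k ∧ ∀ i < k, c i = 0

/-!
Write `Z(t)` for the Zeckendorf index set of `t`. The numbers whose Zeckendorf decomposition has
smallest summand `F_{2k}` are the numbers `F_{2k} + ∑_{a ∈ Z(t)} F_{a+2k}`, and shifting all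
indices by `2k` preserves the order of Zeckendorf sums, so this is `p(t+1)`.

A Chung–Graham decomposition of `p(t+1)` is built by strong induction on `t`, adding the largest
summand `F_N` of `p(t+1)` on top of a decomposition whose highest coefficient sits at `u < N/2`.
For even `N` this is a new coefficient `1` at `N/2`; for `N = 2m+1` the identity
`F_{2u} + F_{2m+1} = 2 F_{2u+2} + F_{2u+4} + ⋯ + F_{2m}` lowers the coefficient at `u` by one and
puts `2` at `u+1` and `1` at `u+2, …, m`. So the coefficient of `F_{2k}` changes only when the
smallest summand of `t` is added, and it survives iff that index is even. The golden string obeys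
the same recursion: `S_{F_n + r} = S_r` for `n ≥ 3`, `0 < r ≤ F_{n-1}`, and for `n ≥ 2`
`S_{F_n} = B` iff `n` is even.
Finally, Chung–Graham decompositions are unique because `∑_{i ≤ m} c_i F_{2i} < F_{2m+2}`.
-/

open Nat Finset

lemma gs_prefix_succ : ∀ n, gs n <+: gs (n + 1)
  | 0 => List.nil_prefix
  | 1 => ⟨[false], rfl⟩
  | _ + 2 => List.prefix_append _ _

lemma gs_prefix_of_le {m n : ℕ} (h : m ≤ n) : gs m <+: gs n := by
  induction n, h using Nat.le_induction with
  | base => exact List.prefix_rfl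
  | succ n _ ih => exact ih.trans (gs_prefix_succ n)

lemma length_gs : ∀ n, (gs (n + 1)).length = fib (n + 2)
  | 0 => rfl
  | 1 => rfl
  | n + 2 => by
    rw [show gs (n + 3) = gs (n + 2) ++ gs (n + 1) from rfl, List.length_append,
      length_gs (n + 1), length_gs n, fib_add_two (n := n + 2), add_comm]

-- `S` has no 0-th letter; this junk value `B` makes `t = 0` the base case of
-- `exists_isCG_zeckMinSeq`.
lemma goldenLetter_zero : goldenLetter 0 = true := rfl

lemma goldenLetter_eq_getD {i n : ℕ} (h : i - 1 < (gs n).length) :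
    goldenLetter i = (gs n).getD (i - 1) true := by
  have hi : i - 1 < (gs (i + 1)).length := by
    have := le_fib_add_one (i + 2)
    rw [length_gs]
    omega
  unfold goldenLetter
  rcases le_total (i + 1) n with hn | hn
  · obtain ⟨l, hl⟩ := gs_prefix_of_le hn
    rw [← hl, List.getD_append _ _ _ _ hi]
  · obtain ⟨l, hl⟩ := gs_prefix_of_le hn
    rw [← hl, List.getD_append _ _ _ _ h]

lemma goldenLetter_fib_add {n r : ℕ} (hr : 1 ≤ r) (hr' : r ≤ fib (n + 2)) :
    goldenLetter (fib (n + 3) + r) = goldenLetter r := by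
  have hlen₂ : (gs (n + 1)).length = fib (n + 2) := length_gs n
  have hlen₃ : (gs (n + 2)).length = fib (n + 3) := length_gs (n + 1)
  have hlen₄ : (gs (n + 3)).length = fib (n + 4) := length_gs (n + 2)
  have hfib : fib (n + 4) = fib (n + 2) + fib (n + 3) := fib_add_two
  rw [goldenLetter_eq_getD (n := n + 3) (by omega),
    show gs (n + 3) = gs (n + 2) ++ gs (n + 1) from rfl,
    List.getD_append_right _ _ _ _ (by omega), hlen₃,
    show fib (n + 3) + r - 1 - fib (n + 3) = r - 1 by omega, ← goldenLetter_eq_getD (by omega)]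

lemma goldenLetter_fib : ∀ n, goldenLetter (fib (n + 2)) = decide (Even n)
  | 0 => rfl
  | 1 => rfl
  | n + 2 => by
    rw [fib_add_two (n := n + 2), add_comm, goldenLetter_fib_add (fib_pos.2 (by omega)) le_rfl,
      goldenLetter_fib n]
    simp [Nat.even_add]

lemma two_le_greatestFib {t : ℕ} (ht : t ≠ 0) : 2 ≤ greatestFib t := by
  rw [le_greatestFib, fib_two]
  omega

lemma sub_fib_greatestFib_lt_self {t : ℕ} (ht : t ≠ 0) : t - fib (greatestFib t) < t :=
  Nat.sub_lt (Nat.pos_of_ne_zero ht) (fib_pos.2 (greatestFib_pos.2 (Nat.pos_of_ne_zero ht)))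

lemma sub_fib_greatestFib_lt {t : ℕ} (ht : t ≠ 0) :
    t - fib (greatestFib t) < fib (greatestFib t - 1) := by
  have := two_le_greatestFib ht
  have := greatestFib_sub_fib_greatestFib_le_greatestFib ht
  exact greatestFib_lt.1 (by omega)

lemma goldenLetter_eq_sub_fib_greatestFib {t : ℕ} (hr : t - fib (greatestFib t) ≠ 0) :
    goldenLetter t = goldenLetter (t - fib (greatestFib t)) := by
  have ht : t ≠ 0 := by rintro rfl; simp at hr
  have hlt := sub_fib_greatestFib_lt ht
  have hle := fib_greatestFib_le t
  have hg : 3 ≤ greatestFib t := by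
    by_contra! h
    have := fib_mono (show greatestFib t - 1 ≤ 2 by omega)
    rw [fib_two] at this
    omega
  obtain ⟨n, hn⟩ : ∃ n, greatestFib t = n + 3 := ⟨_, (Nat.sub_add_cancel hg).symm⟩
  rw [hn, show n + 3 - 1 = n + 2 by omega] at hlt
  rw [hn] at hle hr ⊢
  conv_lhs => rw [← Nat.add_sub_cancel' hle]
  exact goldenLetter_fib_add (by omega) hlt.le

lemma isZeck_zeckendorf (n : ℕ) : IsZeck n (zeckendorf n).toFinset := by
  have : IsTrans ℕ fun a b => b + 2 ≤ a := ⟨fun _ _ _ h₁ h₂ => by omega⟩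
  have : Std.Symm fun a b : ℕ => b + 2 ≤ a ∨ a + 2 ≤ b := ⟨fun _ _ => Or.symm⟩
  have hrep := isZeckendorfRep_zeckendorf n
  rw [List.IsZeckendorfRep, List.isChain_iff_pairwise, List.pairwise_append] at hrep
  obtain ⟨hpw, -, hzero⟩ := hrep
  refine ⟨fun a ha => ?_, fun a ha ha' => ?_, ?_⟩
  · have := hzero a (List.mem_toFinset.1 ha) 0 (List.mem_singleton_self 0)
    omega
  · have := (hpw.imp (S := fun a b => b + 2 ≤ a ∨ a + 2 ≤ b) Or.inl).forall
      (List.mem_toFinset.1 ha) (List.mem_toFinset.1 ha') (by omega)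
    omega
  · rw [List.sum_toFinset _ (hpw.imp fun h => by omega), sum_zeckendorf_fib]

lemma IsZeck.toFinset_zeckendorf {n : ℕ} {s : Finset ℕ} (h : IsZeck n s) :
    (zeckendorf n).toFinset = s := by
  obtain ⟨htwo, hgap, rfl⟩ := h
  set l := s.sort (· ≥ · : ℕ → ℕ → Prop)
  have hrep : l.IsZeckendorfRep := by
    refine List.Pairwise.isChain (List.pairwise_append.2 ⟨?_, List.pairwise_singleton _ _, ?_⟩)
    · refine (sortedGT_sort s).pairwise.imp_of_mem fun {a b} ha hb hab => ?_
      have := hgap b ((mem_sort _).1 hb)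
      have : a ≠ b + 1 := by rintro rfl; exact this ((mem_sort _).1 ha)
      omega
    · intro a ha b hb
      rw [List.mem_singleton.1 hb]
      exact htwo a ((mem_sort _).1 ha)
  have hsum : (l.map fib).sum = ∑ i ∈ s, fib i := by
    rw [← List.sum_toFinset _ (sort_nodup _ _), sort_toFinset]
  rw [← hsum, zeckendorf_sum_fib hrep, sort_toFinset]

lemma IsZeck.fib_le {n : ℕ} {s : Finset ℕ} (h : IsZeck n s) {a : ℕ} (ha : a ∈ s) : fib a ≤ n :=
  h.2.2 ▸ single_le_sum (fun _ _ => Nat.zero_le _) ha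

def zeckShift (e t : ℕ) : ℕ := ∑ a ∈ (zeckendorf t).toFinset, fib (a + e)

lemma zeckShift_zero (e : ℕ) : zeckShift e 0 = 0 := by simp [zeckShift]

lemma zeckShift_of_ne_zero (e : ℕ) {t : ℕ} (ht : t ≠ 0) :
    zeckShift e t = fib (greatestFib t + e) + zeckShift e (t - fib (greatestFib t)) := by
  have hnot : greatestFib t ∉ (zeckendorf (t - fib (greatestFib t))).toFinset := fun hmem => by
    have := le_greatestFib.2 ((isZeck_zeckendorf _).fib_le hmem)
    have := greatestFib_sub_fib_greatestFib_le_greatestFib ht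
    have := two_le_greatestFib ht
    omega
  rw [zeckShift, zeckendorf_of_pos (Nat.pos_of_ne_zero ht), List.toFinset_cons,
    sum_insert hnot, zeckShift]

lemma zeckShift_lt_fib (e t : ℕ) : zeckShift e t < fib (greatestFib t + e + 1) := by
  induction t using Nat.strong_induction_on with
  | _ t ih =>
    rcases eq_or_ne t 0 with rfl | ht
    · simp [zeckShift_zero, fib_pos]
    have hg := two_le_greatestFib ht
    have hr := greatestFib_sub_fib_greatestFib_le_greatestFib ht
    have hrec := ih _ (sub_fib_greatestFib_lt_self ht)
    have hmono := fib_mono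
      (show greatestFib (t - fib (greatestFib t)) + e + 1 ≤ greatestFib t - 1 + e by omega)
    have hfib := fib_add_two (n := greatestFib t - 1 + e)
    rw [show greatestFib t - 1 + e + 2 = greatestFib t + e + 1 by omega,
      show greatestFib t - 1 + e + 1 = greatestFib t + e by omega] at hfib
    rw [zeckShift_of_ne_zero e ht]
    omega

lemma zeckShift_strictMono (e : ℕ) : StrictMono (zeckShift e) := by
  intro t t' hlt
  induction t' using Nat.strong_induction_on generalizing t with
  | _ t' ih =>
    have ht' : t' ≠ 0 := by omega
    rw [zeckShift_of_ne_zero e ht']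
    rcases eq_or_ne t 0 with rfl | ht
    · rw [zeckShift_zero]
      exact Nat.add_pos_left (fib_pos.2 (by have := two_le_greatestFib ht'; omega)) _
    rcases (greatestFib_mono hlt.le).lt_or_eq with hg | hg
    · have := zeckShift_lt_fib e t
      have := fib_mono (show greatestFib t + e + 1 ≤ greatestFib t' + e by omega)
      omega
    · rw [zeckShift_of_ne_zero e ht, hg]
      have := fib_greatestFib_le t
      have := ih _ (sub_fib_greatestFib_lt_self ht') (t := t - fib (greatestFib t'))
        (by rw [← hg]; omega)
      omega

def zeckMinSeq (k t : ℕ) : ℕ := fib (2 * k) + zeckShift (2 * k) t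

lemma zeckMinSeq_strictMono (k : ℕ) : StrictMono (zeckMinSeq k) :=
  fun _ _ h => Nat.add_lt_add_left (zeckShift_strictMono _ h) _

lemma zeckMin_zeckMinSeq {k : ℕ} (hk : 1 ≤ k) (t : ℕ) : ZeckMin k (zeckMinSeq k t) := by
  obtain ⟨htwo, hgap, -⟩ := isZeck_zeckendorf t
  set Z := (zeckendorf t).toFinset
  have hnot : 2 * k ∉ Z.map (addRightEmbedding (2 * k)) := by
    simp only [mem_map, addRightEmbedding_apply, not_exists, not_and]
    intro a ha h
    have := htwo a ha
    omega
  refine ⟨insert (2 * k) (Z.map (addRightEmbedding (2 * k))), ⟨?_, ?_, ?_⟩,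
    mem_insert_self _ _, ?_⟩
  · simp only [mem_insert, mem_map, addRightEmbedding_apply]
    rintro i (rfl | ⟨a, ha, rfl⟩)
    · omega
    · have := htwo a ha; omega
  · simp only [mem_insert, mem_map, addRightEmbedding_apply, not_or, not_exists, not_and]
    rintro i (rfl | ⟨a, ha, rfl⟩)
    · exact ⟨by omega, fun b hb h => by have := htwo b hb; omega⟩
    · refine ⟨by omega, fun b hb h => hgap a ha ?_⟩
      rwa [show a + 1 = b by omega]
  · rw [sum_insert hnot, sum_map]
    rfl
  · simp only [mem_insert, mem_map, addRightEmbedding_apply]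
    rintro i (rfl | ⟨a, -, rfl⟩) <;> omega

lemma ZeckMin.exists_zeckMinSeq_eq {k n : ℕ} (h : ZeckMin k n) : ∃ t, zeckMinSeq k t = n := by
  obtain ⟨s, ⟨-, hgap, rfl⟩, hmem, hmin⟩ := h
  have hrest : ∀ a ∈ s.erase (2 * k), 2 * k + 2 ≤ a := by
    intro a ha
    have := hmin a (mem_of_mem_erase ha)
    have := ne_of_mem_erase ha
    have : a ≠ 2 * k + 1 := by rintro rfl; exact hgap _ hmem (mem_of_mem_erase ha)
    omega
  have hinj : Set.InjOn (· - 2 * k) (s.erase (2 * k) : Set ℕ) := by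
    intro a ha b hb hab
    have := hrest a ha
    have := hrest b hb
    simp only at hab
    omega
  set s' := (s.erase (2 * k)).image (· - 2 * k)
  have hs' : IsZeck (∑ i ∈ s', fib i) s' := by
    refine ⟨?_, ?_, rfl⟩
    · simp only [s', mem_image]
      rintro _ ⟨a, ha, rfl⟩
      have := hrest a ha
      omega
    · simp only [s', mem_image, not_exists, not_and]
      rintro _ ⟨a, ha, rfl⟩ b hb hab
      have := hrest a ha
      have := hrest b hb
      exact hgap a (mem_of_mem_erase ha) (show a + 1 = b by omega ▸ mem_of_mem_erase hb)
  refine ⟨∑ i ∈ s', fib i, ?_⟩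
  rw [zeckMinSeq, zeckShift, hs'.toFinset_zeckendorf, sum_image hinj, ← add_sum_erase _ _ hmem]
  congr 1
  refine sum_congr rfl fun a ha => ?_
  have := hrest a ha
  congr 1
  omega

lemma zeckMin_iff {k : ℕ} (hk : 1 ≤ k) (n : ℕ) : ZeckMin k n ↔ ∃ t, zeckMinSeq k t = n :=
  ⟨ZeckMin.exists_zeckMinSeq_eq, fun ⟨t, ht⟩ => ht ▸ zeckMin_zeckMinSeq hk t⟩

lemma Nat.nth_eq_of_strictMono {p : ℕ → Prop} {f : ℕ → ℕ} (hf : StrictMono f)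
    (hp : ∀ n, p n ↔ ∃ t, f t = n) : nth p = f := by
  have hinf : (Set.ofPred p).Infinite := by
    rw [show Set.ofPred p = Set.range f from Set.ext hp]
    exact Set.infinite_range_of_injective hf.injective
  have hall : ∀ t, t ∈ {n | ∀ hfin : (Set.ofPred p).Finite, n < #hfin.toFinset} :=
    fun _ hfin => absurd hfin hinf
  funext t
  refine (eq_nth_of_strictMonoOn_of_mapsTo_of_surjOn f ?_ ?_ (hf.strictMonoOn _) (hall t)).symm
  · intro n hn
    obtain ⟨t, rfl⟩ := (hp n).1 hn
    exact ⟨t, hall t, rfl⟩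
  · exact fun t _ => (hp _).2 ⟨t, rfl⟩

lemma nth_zeckMin {k : ℕ} (hk : 1 ≤ k) : nth (ZeckMin k) = zeckMinSeq k :=
  Nat.nth_eq_of_strictMono (zeckMinSeq_strictMono k) (zeckMin_iff hk)

def cgValue (c : ℕ →₀ ℕ) : ℕ := c.sum fun i a => a * fib (2 * i)

lemma cgValue_add (c d : ℕ →₀ ℕ) : cgValue (c + d) = cgValue c + cgValue d :=
  Finsupp.sum_add_index' (fun _ => zero_mul _) fun _ _ _ => add_mul _ _ _

lemma cgValue_single (i a : ℕ) : cgValue (Finsupp.single i a) = a * fib (2 * i) :=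
  Finsupp.sum_single_index (zero_mul _)

lemma cgValue_eq_sum_range {c : ℕ →₀ ℕ} {M : ℕ} (h : c.support ⊆ range M) :
    cgValue c = ∑ i ∈ range M, c i * fib (2 * i) :=
  Finsupp.sum_of_support_subset c h _ fun _ _ => zero_mul _

lemma isCG_zero : IsCG 0 0 :=
  ⟨fun _ => Nat.zero_le _, rfl, fun _ _ _ h => absurd h (by simp), by simp⟩

section Moves

variable {c : ℕ →₀ ℕ}

lemma add_single_one_apply {m : ℕ} (htop : ∀ i, m ≤ i → c i = 0) (i : ℕ) :
    (c + Finsupp.single m 1 : ℕ →₀ ℕ) i = if i = m then 1 else c i := by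
  rcases eq_or_ne i m with rfl | him
  · simp [htop]
  · simp [him]

lemma carry_apply {u : ℕ} (htop : ∀ i, u < i → c i = 0) (i : ℕ) :
    (c - Finsupp.single u 1 + Finsupp.single (u + 1) 2 : ℕ →₀ ℕ) i =
      if i = u + 1 then 2 else if i = u then c u - 1 else c i := by
  rcases eq_or_ne i (u + 1) with rfl | hi₁
  · simp [htop]
  rcases eq_or_ne i u with rfl | hi₂
  · simp
  · simp [hi₁, hi₂]

lemma cgValue_carry {u : ℕ} (hu : 1 ≤ c u) :
    cgValue (c - Finsupp.single u 1 + Finsupp.single (u + 1) 2) = cgValue c + fib (2 * u + 3) := by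
  have hsplit : c = c - Finsupp.single u 1 + Finsupp.single u 1 :=
    (tsub_add_cancel_of_le (Finsupp.single_le_iff.2 hu)).symm
  have hfib : fib (2 * u) + fib (2 * u + 3) = 2 * fib (2 * (u + 1)) := by
    have h₂ : fib (2 * u + 2) = fib (2 * u) + fib (2 * u + 1) := fib_add_two
    have h₃ : fib (2 * u + 3) = fib (2 * u + 1) + fib (2 * u + 2) := fib_add_two
    rw [show 2 * (u + 1) = 2 * u + 2 by ring]
    omega
  conv_rhs => rw [hsplit]
  rw [cgValue_add, cgValue_add, cgValue_single, cgValue_single, one_mul, add_assoc, hfib]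

end Moves

namespace IsCG

variable {n : ℕ} {c : ℕ →₀ ℕ}

-- The second bound, for prefixes in which every `2` is already followed by a `0`, is what
-- carries the induction past a coefficient `2`.
lemma sum_range_lt (h : IsCG n c) (m : ℕ) :
    ∑ i ∈ range (m + 1), c i * fib (2 * i) < fib (2 * m + 2) ∧
      ((∀ i ≤ m, c i = 2 → ∃ j, i < j ∧ j ≤ m ∧ c j = 0) →
        ∑ i ∈ range (m + 1), c i * fib (2 * i) < fib (2 * m + 1)) := by
  obtain ⟨hle, h0, hsep, -⟩ := h
  induction m with
  | zero => simp [h0]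
  | succ m ih =>
    rw [sum_range_succ, show 2 * (m + 1) + 2 = 2 * m + 4 by ring,
      show 2 * (m + 1) + 1 = 2 * m + 3 by ring, show 2 * (m + 1) = 2 * m + 2 by ring]
    have f₄ : fib (2 * m + 4) = fib (2 * m + 2) + fib (2 * m + 3) := fib_add_two
    have f₃ : fib (2 * m + 3) = fib (2 * m + 1) + fib (2 * m + 2) := fib_add_two
    have hcm := hle (m + 1)
    constructor
    · rcases (show c (m + 1) ≤ 1 ∨ c (m + 1) = 2 by omega) with hc | hc
      · have := Nat.mul_le_mul_right (fib (2 * m + 2)) hc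
        omega
      · have := ih.2 fun i hi hci => by
          obtain ⟨j, hij, hj, hcj⟩ := hsep i (m + 1) (by omega) hci hc
          exact ⟨j, hij, by omega, hcj⟩
        rw [hc]
        omega
    · intro hclosed
      rcases (show c (m + 1) = 0 ∨ c (m + 1) = 1 ∨ c (m + 1) = 2 by omega) with hc | hc | hc
      · rw [hc]
        omega
      · have := ih.2 fun i hi hci => by
          obtain ⟨j, hij, hj, hcj⟩ := hclosed i (by omega) hci
          exact ⟨j, hij, by rcases hj.lt_or_eq with hj | rfl <;> omega, hcj⟩
        rw [hc]
        omega
      · obtain ⟨j, hj, hj', -⟩ := hclosed (m + 1) le_rfl hc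
        omega

lemma le_of_sum_range_le (h : IsCG n c) {d : ℕ →₀ ℕ} (m : ℕ)
    (hsum : ∑ i ∈ range (m + 2), d i * fib (2 * i) ≤ ∑ i ∈ range (m + 2), c i * fib (2 * i)) :
    d (m + 1) ≤ c (m + 1) := by
  have hlt := (h.sum_range_lt m).1
  rw [sum_range_succ _ (m + 1), sum_range_succ _ (m + 1),
    show 2 * (m + 1) = 2 * m + 2 by ring] at hsum
  by_contra! hcd
  have := Nat.mul_le_mul_right (fib (2 * m + 2)) (show c (m + 1) + 1 ≤ d (m + 1) from hcd)
  rw [add_mul, one_mul] at this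
  omega

lemma eq_of_lt_of_sum_range_eq {n' : ℕ} {c' : ℕ →₀ ℕ} (h : IsCG n c) (h' : IsCG n' c') {M : ℕ}
    (hsum : ∑ i ∈ range M, c i * fib (2 * i) = ∑ i ∈ range M, c' i * fib (2 * i)) :
    ∀ i < M, c i = c' i := by
  induction M with
  | zero => simp
  | succ M ih =>
    have htop : c M = c' M := by
      cases M with
      | zero => rw [h.2.1, h'.2.1]
      | succ m =>
        exact le_antisymm (h'.le_of_sum_range_le m hsum.le) (h.le_of_sum_range_le m hsum.ge)
    rw [sum_range_succ, sum_range_succ, htop, add_left_inj] at hsum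
    intro i hi
    rcases (Nat.lt_succ_iff.1 hi).lt_or_eq with hi | rfl
    · exact ih hsum i hi
    · exact htop

lemma unique {c' : ℕ →₀ ℕ} (h : IsCG n c) (h' : IsCG n c') : c = c' := by
  obtain ⟨M, hM⟩ := (c.support ∪ c'.support).exists_nat_subset_range
  have hc : c.support ⊆ range M := subset_union_left.trans hM
  have hc' : c'.support ⊆ range M := subset_union_right.trans hM
  have hsum := h.2.2.2.symm.trans h'.2.2.2
  rw [← cgValue, ← cgValue, cgValue_eq_sum_range hc, cgValue_eq_sum_range hc'] at hsum
  ext i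
  by_cases hi : i < M
  · exact h.eq_of_lt_of_sum_range_eq h' hsum i hi
  · rw [Finsupp.notMem_support_iff.1 fun hi' => hi (mem_range.1 (hc hi')),
      Finsupp.notMem_support_iff.1 fun hi' => hi (mem_range.1 (hc' hi'))]

lemma add_single (h : IsCG n c) {m : ℕ} (hm : 0 < m) (htop : ∀ i, m ≤ i → c i = 0) :
    IsCG (n + fib (2 * m)) (c + Finsupp.single m 1) := by
  obtain ⟨hle, h0, hsep, rfl⟩ := h
  have happ := add_single_one_apply htop
  have htwo : ∀ i, (c + Finsupp.single m 1 : ℕ →₀ ℕ) i = 2 → i < m ∧ c i = 2 := by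
    intro i hi
    rw [happ] at hi
    split_ifs at hi
    · omega
    refine ⟨lt_of_not_ge fun hmi => ?_, hi⟩
    rw [htop i hmi] at hi
    omega
  refine ⟨fun i => ?_, ?_, fun i₁ i₂ hlt h₁ h₂ => ?_, ?_⟩
  · rw [happ]
    split_ifs <;> simp [hle]
  · rw [happ, if_neg hm.ne, h0]
  · obtain ⟨-, h₁⟩ := htwo i₁ h₁
    obtain ⟨hi₂, h₂⟩ := htwo i₂ h₂
    obtain ⟨j, hj, hj', hcj⟩ := hsep i₁ i₂ hlt h₁ h₂
    exact ⟨j, hj, hj', by rw [happ, if_neg (by omega), hcj]⟩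
  · change _ = cgValue _
    rw [cgValue_add, cgValue_single, one_mul]
    rfl

lemma carry (h : IsCG n c) {u : ℕ} (htop : ∀ i, u < i → c i = 0) (hu : 1 ≤ c u) :
    IsCG (n + fib (2 * u + 3)) (c - Finsupp.single u 1 + Finsupp.single (u + 1) 2) := by
  obtain ⟨hle, h0, hsep, rfl⟩ := h
  have hu0 : u ≠ 0 := by rintro rfl; omega
  have happ := carry_apply htop
  have htwo : ∀ i, (c - Finsupp.single u 1 + Finsupp.single (u + 1) 2 : ℕ →₀ ℕ) i = 2 →
      i = u + 1 ∨ i < u ∧ c i = 2 := by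
    intro i hi
    rw [happ] at hi
    split_ifs at hi with h₁ h₂
    · exact .inl h₁
    · have := hle u; omega
    · refine .inr ⟨lt_of_not_ge fun hui => ?_, hi⟩
      rw [htop i (by omega)] at hi
      omega
  refine ⟨fun i => ?_, ?_, fun i₁ i₂ hlt h₁ h₂ => ?_, ?_⟩
  · have := hle i
    have := hle u
    rw [happ]
    split_ifs <;> omega
  · rw [happ, if_neg (by omega), if_neg (Ne.symm hu0), h0]
  · rcases htwo i₁ h₁ with rfl | ⟨hi₁, h₁⟩
    · rcases htwo i₂ h₂ with rfl | ⟨hi₂, -⟩ <;> omega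
    rcases htwo i₂ h₂ with rfl | ⟨hi₂, h₂⟩
    · rcases (show c u = 1 ∨ c u = 2 by have := hle u; omega) with hcu | hcu
      · exact ⟨u, hi₁, by omega, by rw [happ, if_neg (by omega), if_pos rfl, hcu]⟩
      · obtain ⟨j, hj, hj', hcj⟩ := hsep i₁ u hi₁ h₁ hcu
        exact ⟨j, hj, by omega, by rw [happ, if_neg (by omega), if_neg (by omega), hcj]⟩
    · obtain ⟨j, hj, hj', hcj⟩ := hsep i₁ i₂ hlt h₁ h₂
      exact ⟨j, hj, hj', by rw [happ, if_neg (by omega), if_neg (by omega), hcj]⟩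
  · exact (cgValue_carry hu).symm

lemma exists_add_fib_odd (h : IsCG n c) {u m : ℕ} (htop : ∀ i, u < i → c i = 0) (hu : 1 ≤ c u)
    (hm : u < m) :
    ∃ c' : ℕ →₀ ℕ, IsCG (n + fib (2 * m + 1)) c' ∧ (∀ i, m < i → c' i = 0) ∧ 1 ≤ c' m ∧
      (∀ i < u, c' i = c i) ∧ c' u = c u - 1 := by
  induction m, hm using Nat.le_induction with
  | base =>
    refine ⟨_, h.carry htop hu, fun i hi => ?_, ?_, fun i hi => ?_, ?_⟩ <;>
      rw [carry_apply htop]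
    · rw [if_neg (by omega), if_neg (by omega)]
      exact htop i (by omega)
    · simp
    · rw [if_neg (by omega), if_neg (by omega)]
    · rw [if_neg (by omega), if_pos rfl]
  | succ m hm ih =>
    obtain ⟨c', hc', htop', hm', hlow, hu'⟩ := ih
    have htop'' : ∀ i, m + 1 ≤ i → c' i = 0 := fun i hi => htop' i (by omega)
    have hfib : fib (2 * (m + 1) + 1) = fib (2 * m + 1) + fib (2 * (m + 1)) := by
      rw [show 2 * (m + 1) + 1 = 2 * m + 1 + 2 by ring, fib_add_two]
      ring_nf
    refine ⟨c' + Finsupp.single (m + 1) 1, ?_, fun i hi => ?_, ?_, fun i hi => ?_, ?_⟩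
    · rw [hfib, ← add_assoc]
      exact hc'.add_single (by omega) htop''
    all_goals rw [add_single_one_apply htop'']
    · rw [if_neg (by omega)]
      exact htop' i (by omega)
    · simp
    · rw [if_neg (by omega)]
      exact hlow i hi
    · rw [if_neg (by omega)]
      exact hu'

lemma exists_add_fib (h : IsCG n c) {u N : ℕ} (htop : ∀ i, u < i → c i = 0) (hu : 1 ≤ c u)
    (hN : 2 * u + 2 ≤ N) :
    ∃ c' : ℕ →₀ ℕ, IsCG (n + fib N) c' ∧ (∀ i, N / 2 < i → c' i = 0) ∧ 1 ≤ c' (N / 2) ∧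
      (∀ i < u, c' i = c i) ∧ c' u = if Even N then c u else c u - 1 := by
  obtain ⟨m, rfl | rfl⟩ := Nat.even_or_odd' N
  · have htop' : ∀ i, m ≤ i → c i = 0 := fun i hi => htop i (by omega)
    have hm : 2 * m / 2 = m := by omega
    refine ⟨_, h.add_single (m := m) (by omega) htop', fun i hi => ?_, ?_, fun i hi => ?_, ?_⟩ <;>
      simp only [add_single_one_apply htop', hm, even_two_mul, if_true]
    · rw [if_neg (by omega)]
      exact htop' i (by omega)
    · simp
    · rw [if_neg (by omega)]
    · rw [if_neg (by omega)]
  · obtain ⟨c', hc', htop', hm', hlow, hu'⟩ := h.exists_add_fib_odd (m := m) htop hu (by omega)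
    have hm : (2 * m + 1) / 2 = m := by omega
    refine ⟨c', hc', ?_, ?_, hlow, ?_⟩
    · rwa [hm]
    · rwa [hm]
    rw [if_neg (Nat.not_even_iff_odd.2 (odd_two_mul_add_one m)), hu']

end IsCG

lemma exists_isCG_zeckMinSeq {k : ℕ} (hk : 1 ≤ k) (t : ℕ) :
    ∃ c : ℕ →₀ ℕ, IsCG (zeckMinSeq k t) c ∧ (∀ i < k, c i = 0) ∧
      (∀ i, k + greatestFib t / 2 < i → c i = 0) ∧ 1 ≤ c (k + greatestFib t / 2) ∧
      c k = (goldenLetter t).toNat := by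
  induction t using Nat.strong_induction_on with
  | _ t ih =>
  rcases eq_or_ne t 0 with rfl | ht
  · have hc := isCG_zero.add_single hk fun _ _ => rfl
    rw [zero_add, zero_add] at hc
    refine ⟨_, by simpa [zeckMinSeq, zeckShift_zero] using hc, ?_⟩
    simp only [greatestFib_eq_zero.2 rfl, Nat.zero_div, add_zero, Finsupp.single_eq_same,
      goldenLetter_zero, Bool.toNat_true, le_refl, and_true]
    exact ⟨fun i hi => by rw [Finsupp.single_apply, if_neg (by omega)],
      fun i hi => by rw [Finsupp.single_apply, if_neg (by omega)]⟩
  have hg := two_le_greatestFib ht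
  have hgr := greatestFib_sub_fib_greatestFib_le_greatestFib ht
  obtain ⟨c, hc, hlow, htop, hu, hck⟩ := ih _ (sub_fib_greatestFib_lt_self ht)
  obtain ⟨c', hc', htop', hu', hlow', hcu'⟩ :=
    hc.exists_add_fib (N := greatestFib t + 2 * k) htop hu (by omega)
  have hN : (greatestFib t + 2 * k) / 2 = k + greatestFib t / 2 := by omega
  refine ⟨c', ?_, fun i hi => ?_, hN ▸ htop', hN ▸ hu', ?_⟩
  · rw [zeckMinSeq, zeckShift_of_ne_zero _ ht, add_left_comm, add_comm]
    exact hc'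
  · rw [hlow' i (by omega), hlow i hi]
  rcases eq_or_ne (t - fib (greatestFib t)) 0 with hr | hr
  · rw [hr, greatestFib_eq_zero.2 rfl, Nat.zero_div, add_zero] at hcu'
    have hlet : goldenLetter t = decide (Even (greatestFib t)) := by
      obtain ⟨n, hn⟩ : ∃ n, greatestFib t = n + 2 := ⟨_, (Nat.sub_add_cancel hg).symm⟩
      have := fib_greatestFib_le t
      rw [hn] at this hr ⊢
      rw [show t = fib (n + 2) by omega, goldenLetter_fib]
      simp [Nat.even_add]
    rw [hcu', hck, hr, hlet, goldenLetter_zero]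
    by_cases he : Even (greatestFib t) <;> simp [he, Nat.even_add]
  · have := two_le_greatestFib hr
    rw [hlow' k (by omega), hck, goldenLetter_eq_sub_fib_greatestFib hr]

theorem zeck_to_cg_general (k : ℕ) (hk : 1 ≤ k) (j : ℕ) :
    ((∃ c : ℕ →₀ ℕ, IsCG (Nat.nth (ZeckMin k) (j - 1)) c ∧ 1 ≤ c k) ↔
        goldenLetter (j - 1) = true) ∧
    (∀ c : ℕ →₀ ℕ, IsCG (Nat.nth (ZeckMin k) (j - 1)) c →
        ∀ i : ℕ, c i ≠ 0 → Nat.fib (2 * k) ≤ Nat.fib (2 * i)) := by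
  rw [nth_zeckMin hk]
  obtain ⟨c₀, hc₀, hlow, -, -, hck⟩ := exists_isCG_zeckMinSeq hk (j - 1)
  refine ⟨⟨fun ⟨c, hc, hc1⟩ => ?_, fun hB => ⟨c₀, hc₀, by simp [hck, hB]⟩⟩, fun c hc i hi => ?_⟩
  · rw [hc.unique hc₀, hck] at hc1
    cases h : goldenLetter (j - 1) <;> simp_all
  · rw [hc.unique hc₀] at hi
    exact fib_mono (by have := mt (hlow i); omega)

theorem zeck_to_cg (k : ℕ) (hk : 1 ≤ k) (j : ℕ) (hj : 2 ≤ j) :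
    ((∃ c : ℕ →₀ ℕ, IsCG (Nat.nth (ZeckMin k) (j - 1)) c ∧ 1 ≤ c k) ↔
        goldenLetter (j - 1) = true) ∧
    (∀ c : ℕ →₀ ℕ, IsCG (Nat.nth (ZeckMin k) (j - 1)) c →
        ∀ i : ℕ, c i ≠ 0 → Nat.fib (2 * k) ≤ Nat.fib (2 * i)) :=
  zeck_to_cg_general k hk j
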